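/- (Bounded regret for the symmetric bandit.) Fix θ ∈ (1/2,1) and for γ ∈ (0,1) define the optimal regret at the uniform belief R(γ) = (2θ−1)/(2(1−γ)) − γ(2θ−1)² / (2(1−γ)√(1 − 4γ²θ(1−θ))). Then R(γ) converges as γ → 1⁻ and lim_{γ→1⁻} R(γ) = 1/(2(2θ−1)). In particular the regret of the symmetric two-state Bernoulli bandit at β = 0 remains bounded as the effective horizon 1/(1−γ) tends to infinity. -/

import Mathlib

/-!
With `a = 2θ − 1` the radicand is `1 − γ² + (γa)²`, so multiplying `Rsym` by the conjugate
`√(…) + γa` cancels the factor `1 − γ` in the denominator. The resulting expression is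
continuous at `γ = 1`, where the square root equals `a`, and its value there is `1/(2a)`.
-/

/-- Optimal regret of the symmetric bandit at the uniform belief `β = 0`. -/
noncomputable def Rsym (θ γ : ℝ) : ℝ :=
  (2 * θ - 1) / (2 * (1 - γ))
    - γ * (2 * θ - 1) ^ 2 / (2 * (1 - γ) * Real.sqrt (1 - 4 * γ ^ 2 * θ * (1 - θ)))

open Filter Topology

/-- `Rsym` with the removable singularity at `γ = 1` cancelled. -/
noncomputable def rsymDesingularized (θ γ : ℝ) : ℝ :=
  (2 * θ - 1) * (1 + γ) /
    (2 * √(1 - 4 * γ ^ 2 * θ * (1 - θ)) * (√(1 - 4 * γ ^ 2 * θ * (1 - θ)) + γ * (2 * θ - 1)))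

lemma one_sub_four_mul_sq_mul_mul_one_sub (θ γ : ℝ) :
    1 - 4 * γ ^ 2 * θ * (1 - θ) = 1 - γ ^ 2 + (γ * (2 * θ - 1)) ^ 2 := by
  ring

lemma div_sub_div_eq_div_mul_conj {a γ s : ℝ} (hγ : γ ≠ 1) (hs : s ≠ 0) (hconj : s + γ * a ≠ 0)
    (hs_sq : s ^ 2 = 1 - γ ^ 2 + (γ * a) ^ 2) :
    a / (2 * (1 - γ)) - γ * a ^ 2 / (2 * (1 - γ) * s) = a * (1 + γ) / (2 * s * (s + γ * a)) := by
  have hγ' : 1 - γ ≠ 0 := sub_ne_zero.mpr hγ.symm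
  rw [div_sub_div _ _ (by positivity) (by positivity), div_eq_div_iff (by positivity) (by positivity)]
  linear_combination (4 * a * (1 - γ) * s) * hs_sq

lemma Rsym_eq_rsymDesingularized {θ γ : ℝ} (hγ : |γ| < 1) :
    Rsym θ γ = rsymDesingularized θ γ := by
  have hγ_sq : γ ^ 2 < 1 := (sq_lt_one_iff_abs_lt_one γ).mpr hγ
  have hrad := one_sub_four_mul_sq_mul_mul_one_sub θ γ
  have hs_sq : √(1 - 4 * γ ^ 2 * θ * (1 - θ)) ^ 2 = 1 - γ ^ 2 + (γ * (2 * θ - 1)) ^ 2 := by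
    rw [Real.sq_sqrt (by nlinarith), hrad]
  have hs_pos : 0 < √(1 - 4 * γ ^ 2 * θ * (1 - θ)) := Real.sqrt_pos.mpr (by nlinarith)
  -- `s² − (γa)² = 1 − γ² > 0` forces `s > |γa|`.
  have hconj_pos : 0 < √(1 - 4 * γ ^ 2 * θ * (1 - θ)) + γ * (2 * θ - 1) := by
    linarith [(abs_lt_of_sq_lt_sq' (a := γ * (2 * θ - 1)) (by nlinarith) hs_pos.le).1]
  exact div_sub_div_eq_div_mul_conj (by linarith [le_abs_self γ]) hs_pos.ne' hconj_pos.ne' hs_sq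

lemma sqrt_one_sub_four_mul_one_sq_mul_mul_one_sub {θ : ℝ} (hθ : 1 / 2 < θ) :
    √(1 - 4 * (1 : ℝ) ^ 2 * θ * (1 - θ)) = 2 * θ - 1 := by
  rw [show 1 - 4 * (1 : ℝ) ^ 2 * θ * (1 - θ) = (2 * θ - 1) ^ 2 by ring]
  exact Real.sqrt_sq (by linarith)

lemma rsymDesingularized_one {θ : ℝ} (hθ : 1 / 2 < θ) :
    rsymDesingularized θ 1 = 1 / (2 * (2 * θ - 1)) := by
  have ha : 2 * θ - 1 ≠ 0 := by linarith
  simp only [rsymDesingularized, sqrt_one_sub_four_mul_one_sq_mul_mul_one_sub hθ]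
  field_simp

lemma continuousAt_rsymDesingularized_one {θ : ℝ} (hθ : 1 / 2 < θ) :
    ContinuousAt (rsymDesingularized θ) 1 := by
  refine ContinuousAt.div (by fun_prop) (by fun_prop) ?_
  rw [sqrt_one_sub_four_mul_one_sq_mul_mul_one_sub hθ]
  have ha : 0 < 2 * θ - 1 := by linarith
  positivity

theorem symmetric_bandit_bounded_regret
    (θ : ℝ) (hθ : θ ∈ Set.Ioo (1 / 2 : ℝ) 1) :
    Filter.Tendsto (fun γ => Rsym θ γ)
      (nhdsWithin 1 (Set.Iio (1 : ℝ)))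
      (nhds (1 / (2 * (2 * θ - 1)))) := by
  have hlim : Tendsto (rsymDesingularized θ) (𝓝[<] 1) (𝓝 (1 / (2 * (2 * θ - 1)))) := by
    rw [← rsymDesingularized_one hθ.1]
    exact (continuousAt_rsymDesingularized_one hθ.1).tendsto.mono_left nhdsWithin_le_nhds
  refine hlim.congr' ?_
  filter_upwards [Ioo_mem_nhdsLT (show (0 : ℝ) < 1 by norm_num)] with γ hγ
  exact (Rsym_eq_rsymDesingularized (abs_lt.mpr ⟨by linarith [hγ.1], hγ.2⟩)).symm
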